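/- arXiv:1608.04459 — 3 statements merged into one kernel-verified Lean document; each statement's English description precedes it below -/
import Mathlib

section
/- Let D be a doubly stochastic d×d matrix and q a probability vector with strictly positive entries. If p = D q satisfies p_i = q_{π(i)} for all i for some permutation π, and all entries of q are distinct, then D is the permutation matrix of π, i.e. D_{ij} = δ_{j,π(i)}. -/
/-!
Row `i` of `D` is a probability distribution whose mean of `q` is `q (π i)`. Summed over `i`,
its variances add up to `∑ j, q j ^ 2 - ∑ i, q (π i) ^ 2 = 0` because the columns of `D` sum
to one, so every row is concentrated where `q` takes the value `q (π i)`, that is at `π i`.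
-/

def DoublyStochastic {d : ℕ} (D : Matrix (Fin d) (Fin d) ℝ) : Prop :=
  (∀ i j, 0 ≤ D i j) ∧ (∀ i, ∑ j, D i j = 1) ∧ (∀ j, ∑ i, D i j = 1)

def IsProbVector {ι : Type*} [Fintype ι] (p : ι → ℝ) : Prop :=
  (∀ i, 0 ≤ p i) ∧ ∑ i, p i = 1

open Finset

section

variable {ι : Type*} [Fintype ι]

theorem sum_mul_sub_sq_eq_sum_mul_sq_sub_sq {w q : ι → ℝ} {m : ℝ} (hw : ∑ j, w j = 1)
    (hm : ∑ j, w j * q j = m) :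
    ∑ j, w j * (q j - m) ^ 2 = ∑ j, w j * q j ^ 2 - m ^ 2 := by
  have expand : ∀ j, w j * (q j - m) ^ 2 = w j * q j ^ 2 - 2 * m * (w j * q j) + m ^ 2 * w j :=
    fun j => by ring
  simp_rw [expand, sum_add_distrib, sum_sub_distrib, ← mul_sum, hm, hw]
  ring

variable {D : Matrix ι ι ℝ} {q : ι → ℝ} {σ : Equiv.Perm ι}

theorem sum_sum_mul_sub_sq_eq_zero (hrow : ∀ i, ∑ j, D i j = 1) (hcol : ∀ j, ∑ i, D i j = 1)
    (hσ : ∀ i, ∑ j, D i j * q j = q (σ i)) :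
    ∑ i, ∑ j, D i j * (q j - q (σ i)) ^ 2 = 0 := by
  simp_rw [sum_mul_sub_sq_eq_sum_mul_sq_sub_sq (hrow _) (hσ _), sum_sub_distrib]
  rw [sum_comm, Equiv.sum_comp σ (fun j => q j ^ 2)]
  simp_rw [← sum_mul, hcol, one_mul, sub_self]

theorem apply_eq_of_entry_ne_zero (hnonneg : ∀ i j, 0 ≤ D i j) (hrow : ∀ i, ∑ j, D i j = 1)
    (hcol : ∀ j, ∑ i, D i j = 1) (hσ : ∀ i, ∑ j, D i j * q j = q (σ i)) {i j : ι}
    (hij : D i j ≠ 0) : q j = q (σ i) := by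
  have hterm_nonneg : ∀ i j, 0 ≤ D i j * (q j - q (σ i)) ^ 2 :=
    fun i j => mul_nonneg (hnonneg i j) (sq_nonneg _)
  have hrow_zero := congrFun ((Fintype.sum_eq_zero_iff_of_nonneg fun i =>
    sum_nonneg fun j _ => hterm_nonneg i j).mp (sum_sum_mul_sub_sq_eq_zero hrow hcol hσ)) i
  have hterm_zero := congrFun ((Fintype.sum_eq_zero_iff_of_nonneg (hterm_nonneg i)).mp
    hrow_zero) j
  have hsq : (q j - q (σ i)) ^ 2 = 0 := (mul_eq_zero.mp hterm_zero).resolve_left hij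
  exact sub_eq_zero.mp (pow_eq_zero_iff two_ne_zero |>.mp hsq)

end

theorem doubly_stochastic_permuting_distinct_is_permutation_general {d : ℕ}
    (D : Matrix (Fin d) (Fin d) ℝ) (hD : DoublyStochastic D)
    (q : Fin d → ℝ)
    (hdist : Function.Injective q) (π : Equiv.Perm (Fin d))
    (hperm : ∀ i, ∑ j, D i j * q j = q (π i)) :
    ∀ i j, D i j = if j = π i then 1 else 0 := by
  obtain ⟨hnonneg, hrow, hcol⟩ := hD
  intro i j
  have hoff : ∀ j, j ≠ π i → D i j = 0 := fun j hj =>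
    by_contra fun hij => hj (hdist (apply_eq_of_entry_ne_zero hnonneg hrow hcol hperm hij))
  split_ifs with hj
  · subst hj
    exact (Fintype.sum_eq_single (π i) hoff).symm.trans (hrow i)
  · exact hoff j hj

theorem doubly_stochastic_permuting_distinct_is_permutation {d : ℕ}
    (D : Matrix (Fin d) (Fin d) ℝ) (hD : DoublyStochastic D)
    (q : Fin d → ℝ) (hq : IsProbVector q) (hqpos : ∀ i, 0 < q i)
    (hdist : Function.Injective q) (π : Equiv.Perm (Fin d))
    (hperm : ∀ i, ∑ j, D i j * q j = q (π i)) :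
    ∀ i j, D i j = if j = π i then 1 else 0 :=
  doubly_stochastic_permuting_distinct_is_permutation_general D hD q hdist π hperm
end

section
/- Classical Landauer equality: with system distribution p_S, environment initially in the Gibbs state g_β for energies E_i at inverse temperature β = 1/(k_B T), and a joint distribution r' on S×E with environment marginal p'_E, the energy change satisfies ⟨H_E⟩' − ⟨H_E⟩ = k_B T [ S(p_S) − S(p'_S) + I(S:E)_{r'} + D(p'_E ‖ g_β) ], provided the joint evolution preserves total Shannon entropy: H(r') = H(p_S) + H(g_β). Consequently ⟨H_E⟩' − ⟨H_E⟩ ≥ k_B T [S(p_S) − S(p'_S)]. -/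
noncomputable def shannonEntropy {ι : Type*} [Fintype ι] (p : ι → ℝ) : ℝ :=
  ∑ i, Real.negMulLog (p i)

noncomputable def klDiv {ι : Type*} [Fintype ι] (p q : ι → ℝ) : ℝ :=
  ∑ i, p i * (Real.log (p i) - Real.log (q i))

/-!
The environment energy is linear in `log g = -β E - log Z`, so for any environment distribution
`p` the free-energy identity `D(p ‖ g) = β (⟨E⟩_p - ⟨E⟩_g) - (S(p) - S(g))` holds. Entropy
conservation replaces `S(g)` by `H(r') - S(p_S)`, which is the Landauer equality. The inequality
follows because both `I(S:E) = D(r' ‖ p'_S ⊗ p'_E)` and `D(p'_E ‖ g)` are nonnegative (Gibbs).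
-/

open Real Finset

lemma sub_le_mul_log_sub_log {p q : ℝ} (hp : 0 ≤ p) (hq : 0 ≤ q) (hpq : q = 0 → p = 0) :
    p - q ≤ p * (log p - log q) := by
  rcases hp.eq_or_lt with rfl | hp
  · simpa using hq
  have hq : 0 < q := hq.lt_of_ne fun h => hp.ne' (hpq h.symm)
  have h := log_le_sub_one_of_pos (div_pos hq hp)
  rw [log_div hq.ne' hp.ne', le_sub_iff_add_le, le_div_iff₀ hp] at h
  linarith

theorem klDiv_nonneg {ι : Type*} [Fintype ι] {p q : ι → ℝ} (hp : ∀ i, 0 ≤ p i) (hq : ∀ i, 0 ≤ q i)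
    (hpq : ∀ i, q i = 0 → p i = 0) (hsum : ∑ i, q i ≤ ∑ i, p i) : 0 ≤ klDiv p q :=
  calc (0 : ℝ) ≤ ∑ i, (p i - q i) := by rw [sum_sub_distrib]; linarith
    _ ≤ klDiv p q := sum_le_sum fun i _ => sub_le_mul_log_sub_log (hp i) (hq i) (hpq i)

lemma shannonEntropy_eq_neg_sum_mul_log {ι : Type*} [Fintype ι] (p : ι → ℝ) :
    shannonEntropy p = -∑ i, p i * log (p i) := by
  simp only [shannonEntropy, negMulLog, neg_mul, sum_neg_distrib]

section MutualInformation

variable {α β : Type*} {r : α × β → ℝ}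

lemma shannonEntropy_marginal_fst [Fintype α] [Fintype β] :
    shannonEntropy (fun a => ∑ b, r (a, b)) = -∑ x, r x * log (∑ b, r (x.1, b)) := by
  simp only [shannonEntropy_eq_neg_sum_mul_log, Fintype.sum_prod_type, sum_mul]

lemma shannonEntropy_marginal_snd [Fintype α] [Fintype β] :
    shannonEntropy (fun b => ∑ a, r (a, b)) = -∑ x, r x * log (∑ a, r (a, x.2)) := by
  simp only [shannonEntropy_eq_neg_sum_mul_log, Fintype.sum_prod_type_right, sum_mul]

lemma le_marginal_fst [Fintype β] (hr : ∀ x, 0 ≤ r x) (x : α × β) : r x ≤ ∑ b, r (x.1, b) :=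
  single_le_sum (f := fun b => r (x.1, b)) (fun _ _ => hr _) (mem_univ x.2)

lemma le_marginal_snd [Fintype α] (hr : ∀ x, 0 ≤ r x) (x : α × β) : r x ≤ ∑ a, r (a, x.2) :=
  single_le_sum (f := fun a => r (a, x.2)) (fun _ _ => hr _) (mem_univ x.1)

theorem mutualInformation_eq_klDiv [Fintype α] [Fintype β] (hr : ∀ x, 0 ≤ r x) :
    shannonEntropy (fun a => ∑ b, r (a, b)) + shannonEntropy (fun b => ∑ a, r (a, b)) -
        shannonEntropy r =
      klDiv r (fun x => (∑ b, r (x.1, b)) * ∑ a, r (a, x.2)) := by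
  have hterm : ∀ x, r x * (log (r x) - log ((∑ b, r (x.1, b)) * ∑ a, r (a, x.2))) =
      r x * log (r x) - r x * log (∑ b, r (x.1, b)) - r x * log (∑ a, r (a, x.2)) := by
    intro x
    rcases (hr x).eq_or_lt with h | h
    · simp [← h]
    rw [log_mul (h.trans_le (le_marginal_fst hr x)).ne' (h.trans_le (le_marginal_snd hr x)).ne']
    ring
  rw [shannonEntropy_marginal_fst, shannonEntropy_marginal_snd,
    shannonEntropy_eq_neg_sum_mul_log, klDiv, sum_congr rfl fun x _ => hterm x,
    sum_sub_distrib, sum_sub_distrib]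
  ring

theorem mutualInformation_nonneg [Fintype α] [Fintype β] (hr : ∀ x, 0 ≤ r x) (hr1 : ∑ x, r x = 1) :
    0 ≤ shannonEntropy (fun a => ∑ b, r (a, b)) + shannonEntropy (fun b => ∑ a, r (a, b)) -
        shannonEntropy r := by
  rw [mutualInformation_eq_klDiv hr]
  have hfst : ∀ a, 0 ≤ ∑ b, r (a, b) := fun _ => sum_nonneg fun _ _ => hr _
  have hsnd : ∀ b, 0 ≤ ∑ a, r (a, b) := fun _ => sum_nonneg fun _ _ => hr _
  refine klDiv_nonneg hr (fun x => mul_nonneg (hfst x.1) (hsnd x.2)) (fun x hx => ?_) ?_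
  · rcases mul_eq_zero.mp hx with h | h
    · exact le_antisymm (h ▸ le_marginal_fst hr x) (hr x)
    · exact le_antisymm (h ▸ le_marginal_snd hr x) (hr x)
  · refine le_of_eq ?_
    calc ∑ x : α × β, (∑ b, r (x.1, b)) * ∑ a, r (a, x.2)
        = (∑ a, ∑ b, r (a, b)) * ∑ b, ∑ a, r (a, b) := by
          rw [sum_mul_sum, Fintype.sum_prod_type]
      _ = ∑ x, r x := by
          rw [← Fintype.sum_prod_type, ← Fintype.sum_prod_type_right, hr1, one_mul]

end MutualInformation

section Gibbs

variable {ι : Type*} [Fintype ι] (β : ℝ) (E : ι → ℝ)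

noncomputable def partitionFunction : ℝ := ∑ j, exp (-β * E j)

noncomputable def gibbsState (i : ι) : ℝ := exp (-β * E i) / partitionFunction β E

variable [Nonempty ι]

lemma partitionFunction_pos : 0 < partitionFunction β E :=
  sum_pos (fun _ _ => exp_pos _) univ_nonempty

lemma gibbsState_pos (i : ι) : 0 < gibbsState β E i :=
  div_pos (exp_pos _) (partitionFunction_pos β E)

lemma sum_gibbsState : ∑ i, gibbsState β E i = 1 := by
  simp_rw [gibbsState, ← sum_div]
  exact div_self (partitionFunction_pos β E).ne'

lemma log_gibbsState (i : ι) :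
    log (gibbsState β E i) = -β * E i - log (partitionFunction β E) := by
  rw [gibbsState, log_div (exp_ne_zero _) (partitionFunction_pos β E).ne', log_exp]

lemma klDiv_gibbsState_eq_add_log_partitionFunction {p : ι → ℝ} (hp : ∑ i, p i = 1) :
    klDiv p (gibbsState β E) =
      β * ∑ i, E i * p i + log (partitionFunction β E) - shannonEntropy p := by
  have hterm : ∀ i, p i * (log (p i) - log (gibbsState β E i)) =
      β * (E i * p i) + log (partitionFunction β E) * p i + p i * log (p i) := by
    intro i
    rw [log_gibbsState]
    ring
  rw [klDiv, sum_congr rfl fun i _ => hterm i, sum_add_distrib, sum_add_distrib, ← mul_sum,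
    ← mul_sum, hp, shannonEntropy_eq_neg_sum_mul_log]
  ring

lemma shannonEntropy_gibbsState :
    shannonEntropy (gibbsState β E) =
      β * ∑ i, E i * gibbsState β E i + log (partitionFunction β E) := by
  -- `D(g ‖ g) = 0`
  have h := klDiv_gibbsState_eq_add_log_partitionFunction β E (sum_gibbsState β E)
  rwa [klDiv, sum_congr rfl fun i _ => by rw [sub_self, mul_zero], sum_const_zero, eq_comm,
    sub_eq_zero, eq_comm] at h

theorem klDiv_gibbsState {p : ι → ℝ} (hp : ∑ i, p i = 1) :
    klDiv p (gibbsState β E) =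
      β * (∑ i, E i * p i - ∑ i, E i * gibbsState β E i) -
        (shannonEntropy p - shannonEntropy (gibbsState β E)) := by
  rw [klDiv_gibbsState_eq_add_log_partitionFunction β E hp, shannonEntropy_gibbsState]
  ring

end Gibbs

theorem landauer_equality_general {m n : ℕ} (kB T : ℝ) (hkB : 0 < kB) (hT : 0 < T)
    (E : Fin n → ℝ) (β : ℝ) (hβ : β = 1 / (kB * T))
    (g : Fin n → ℝ)
    (hg : g = fun i => Real.exp (-β * E i) / ∑ j, Real.exp (-β * E j))
    (pS : Fin m → ℝ)
    (r' : Fin m × Fin n → ℝ) (hr'0 : ∀ x, 0 ≤ r' x) (hr'1 : ∑ x, r' x = 1)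
    (p'S : Fin m → ℝ) (hp'S : p'S = fun i => ∑ j, r' (i, j))
    (p'E : Fin n → ℝ) (hp'E : p'E = fun j => ∑ i, r' (i, j))
    (hcons : shannonEntropy r' = shannonEntropy pS + shannonEntropy g) :
    (∑ i, E i * p'E i) - (∑ i, E i * g i) =
        kB * T * (shannonEntropy pS - shannonEntropy p'S +
          (shannonEntropy p'S + shannonEntropy p'E - shannonEntropy r') +
          klDiv p'E g) ∧
    (∑ i, E i * p'E i) - (∑ i, E i * g i) ≥
        kB * T * (shannonEntropy pS - shannonEntropy p'S) := by
  obtain rfl : g = gibbsState β E := hg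
  obtain ⟨x, -, -⟩ := exists_ne_zero_of_sum_ne_zero (hr'1 ▸ one_ne_zero : ∑ x, r' x ≠ 0)
  have : Nonempty (Fin n) := ⟨x.2⟩
  have hE : ∑ j, p'E j = 1 := by rw [hp'E, ← Fintype.sum_prod_type_right, hr'1]
  have hfree_energy : ∑ i, E i * p'E i - ∑ i, E i * gibbsState β E i =
      kB * T * (shannonEntropy p'E - shannonEntropy (gibbsState β E) +
        klDiv p'E (gibbsState β E)) := by
    rw [klDiv_gibbsState β E hE, hβ]
    field_simp
    ring
  have hI : 0 ≤ shannonEntropy p'S + shannonEntropy p'E - shannonEntropy r' :=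
    hp'S ▸ hp'E ▸ mutualInformation_nonneg hr'0 hr'1
  have hD : 0 ≤ klDiv p'E (gibbsState β E) :=
    klDiv_nonneg (hp'E ▸ fun _ => sum_nonneg fun _ _ => hr'0 _)
      (fun i => (gibbsState_pos β E i).le) (fun i h => absurd h (gibbsState_pos β E i).ne')
      (by rw [hE, sum_gibbsState])
  rw [hfree_energy, eq_sub_of_add_eq' hcons.symm]
  exact ⟨by ring, mul_le_mul_of_nonneg_left (by linarith) (mul_pos hkB hT).le⟩

theorem landauer_equality {m n : ℕ} (kB T : ℝ) (hkB : 0 < kB) (hT : 0 < T)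
    (E : Fin n → ℝ) (β : ℝ) (hβ : β = 1 / (kB * T))
    (g : Fin n → ℝ)
    (hg : g = fun i => Real.exp (-β * E i) / ∑ j, Real.exp (-β * E j))
    (pS : Fin m → ℝ) (hpS : IsProbVector pS)
    (r' : Fin m × Fin n → ℝ) (hr'0 : ∀ x, 0 ≤ r' x) (hr'1 : ∑ x, r' x = 1)
    (p'S : Fin m → ℝ) (hp'S : p'S = fun i => ∑ j, r' (i, j))
    (p'E : Fin n → ℝ) (hp'E : p'E = fun j => ∑ i, r' (i, j))
    (hp'Epos : ∀ j, 0 < p'E j)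
    (hcons : shannonEntropy r' = shannonEntropy pS + shannonEntropy g) :
    (∑ i, E i * p'E i) - (∑ i, E i * g i) =
        kB * T * (shannonEntropy pS - shannonEntropy p'S +
          (shannonEntropy p'S + shannonEntropy p'E - shannonEntropy r') +
          klDiv p'E g) ∧
    (∑ i, E i * p'E i) - (∑ i, E i * g i) ≥
        kB * T * (shannonEntropy pS - shannonEntropy p'S) :=
  landauer_equality_general kB T hkB hT E β hβ g hg pS r' hr'0 hr'1 p'S hp'S p'E hp'E hcons
end

section
/- Second law lemma (classical version): if r = p ⊗ q is a product distribution on I × J and r' is obtained from r by a bijection (permutation) of I × J, then the marginals p', q' of r' satisfy H(p') + H(q') ≥ H(p) + H(q). -/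
open Finset Real

lemma Real.negMulLog_add_mul_log_le {r c : ℝ} (hr : 0 ≤ r) (hc : 0 < c) :
    negMulLog r + r * log c ≤ c - r := by
  have hsplit : negMulLog r + r * log c = c * negMulLog (r / c) := by
    have h := negMulLog_mul c (r / c)
    rw [mul_div_cancel₀ r hc.ne'] at h
    rw [h, negMulLog]
    field_simp
    ring
  calc negMulLog r + r * log c = c * negMulLog (r / c) := hsplit
    _ ≤ c * (1 - r / c) := by gcongr; exact negMulLog_le_one_sub_self (by positivity)
    _ = c - r := by field_simp

lemma Real.negMulLog_add_mul_log_add_mul_log_le {r a b : ℝ} (hr : 0 ≤ r) (ha : r ≤ a)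
    (hb : r ≤ b) :
    negMulLog r + r * log a + r * log b ≤ a * b - r := by
  rcases hr.eq_or_lt with rfl | hr
  · simpa using mul_nonneg ha hb
  · rw [add_assoc, ← mul_add, ← log_mul (hr.trans_le ha).ne' (hr.trans_le hb).ne']
    exact negMulLog_add_mul_log_le hr.le (mul_pos (hr.trans_le ha) (hr.trans_le hb))

lemma Real.negMulLog_sum {ι : Type*} [Fintype ι] (f : ι → ℝ) :
    negMulLog (∑ i, f i) = ∑ i, -(f i * log (∑ i, f i)) := by
  rw [negMulLog, sum_neg_distrib, ← sum_mul, neg_mul]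

variable {α β : Type*} [Fintype α] [Fintype β]

lemma IsProbVector.mul {p : α → ℝ} {q : β → ℝ} (hp : IsProbVector p) (hq : IsProbVector q) :
    IsProbVector fun x : α × β => p x.1 * q x.2 :=
  ⟨fun x => mul_nonneg (hp.1 x.1) (hq.1 x.2), by
    simp only [Fintype.sum_prod_type, ← mul_sum, hq.2, mul_one, hp.2]⟩

lemma IsProbVector.comp_equiv {p : α → ℝ} (hp : IsProbVector p) (σ : β ≃ α) :
    IsProbVector (p ∘ σ) :=
  ⟨fun x => hp.1 (σ x), (Equiv.sum_comp σ p).trans hp.2⟩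

lemma shannonEntropy_comp_equiv (p : α → ℝ) (σ : β ≃ α) :
    shannonEntropy (p ∘ σ) = shannonEntropy p :=
  Equiv.sum_comp σ fun x => negMulLog (p x)

lemma shannonEntropy_mul {p : α → ℝ} {q : β → ℝ} (hp : ∑ i, p i = 1) (hq : ∑ j, q j = 1) :
    shannonEntropy (fun x : α × β => p x.1 * q x.2) = shannonEntropy p + shannonEntropy q := by
  simp only [shannonEntropy, Fintype.sum_prod_type, negMulLog_mul, sum_add_distrib,
    ← mul_sum, ← sum_mul, hp, hq, one_mul]

theorem shannonEntropy_le_add_marginals {r : α × β → ℝ} (hr : IsProbVector r) :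
    shannonEntropy r ≤
      shannonEntropy (fun i => ∑ j, r (i, j)) + shannonEntropy (fun j => ∑ i, r (i, j)) := by
  set a : α → ℝ := fun i => ∑ j, r (i, j)
  set b : β → ℝ := fun j => ∑ i, r (i, j)
  have hsum : ∑ i, ∑ j, r (i, j) = 1 := by rw [← Fintype.sum_prod_type, hr.2]
  have ha : ∑ i, a i = 1 := hsum
  have hb : ∑ j, b j = 1 := by rw [← hsum, sum_comm]
  have hgibbs : ∑ i, ∑ j, (negMulLog (r (i, j)) + r (i, j) * log (a i) + r (i, j) * log (b j))
      ≤ 0 := by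
    calc _ ≤ ∑ i, ∑ j, (a i * b j - r (i, j)) :=
          sum_le_sum fun i _ => sum_le_sum fun j _ =>
            negMulLog_add_mul_log_add_mul_log_le (hr.1 (i, j))
              (single_le_sum (fun j _ => hr.1 (i, j)) (mem_univ j))
              (single_le_sum (fun i _ => hr.1 (i, j)) (mem_univ i))
      _ = 0 := by simp only [sum_sub_distrib, ← mul_sum, hb, mul_one, ha, hsum, sub_self]
  have ha_eq : shannonEntropy a = ∑ i, ∑ j, -(r (i, j) * log (a i)) :=
    sum_congr rfl fun i _ => negMulLog_sum _
  have hb_eq : shannonEntropy b = ∑ i, ∑ j, -(r (i, j) * log (b j)) := by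
    rw [sum_comm]; exact sum_congr rfl fun j _ => negMulLog_sum _
  simp only [sum_add_distrib] at hgibbs
  simp only [sum_neg_distrib] at ha_eq hb_eq
  rw [ha_eq, hb_eq, shannonEntropy, Fintype.sum_prod_type]
  linarith

theorem second_law_lemma {m n : ℕ} (p : Fin m → ℝ) (q : Fin n → ℝ)
    (hp : IsProbVector p) (hq : IsProbVector q)
    (σ : Equiv.Perm (Fin m × Fin n))
    (r' : Fin m × Fin n → ℝ) (hr' : r' = fun x => p (σ x).1 * q (σ x).2) :
    shannonEntropy p + shannonEntropy q ≤
      shannonEntropy (fun i : Fin m => ∑ j, r' (i, j)) +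
        shannonEntropy (fun j : Fin n => ∑ i, r' (i, j)) := by
  have hr'_eq : r' = (fun x : Fin m × Fin n => p x.1 * q x.2) ∘ σ := hr'
  calc shannonEntropy p + shannonEntropy q = shannonEntropy r' := by
        rw [hr'_eq, shannonEntropy_comp_equiv, shannonEntropy_mul hp.2 hq.2]
    _ ≤ _ := shannonEntropy_le_add_marginals (hr'_eq ▸ (hp.mul hq).comp_equiv σ)
end
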